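/- For fixed diagonal entries ρ00, ρ11 ≥ 0 with ρ00 + ρ11 = 1, 0 < ρ11 < 1, fixed p ∈ (0,1), and fixed integer n ≥ 1, the temporal-mode randomness function c ↦ R_temp(c) is strictly increasing on the interval 0 ≤ c ≤ √(ρ00·ρ11). -/

import Mathlib

/-- The temporal-mode (arrival-time) randomness function `R_temp(c)`
from Eq. (27) of the paper, for `n` time bins with per-bin decay
probability `p`, with entropies in bits (`Real.logb 2`, which satisfies
the convention `0 · log₂ 0 = 0` since `Real.logb 2 0 = 0`). -/
noncomputable def RandTemp (ρ00 ρ11 p : ℝ) (n : ℕ) (c : ℝ) : ℝ :=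
  let η := (1 - p) ^ n
  let Δ := Real.sqrt ((ρ11 - ρ00) ^ 2 + 4 * c ^ 2)
  let S := -(((1 + Δ) / 2) * Real.logb 2 ((1 + Δ) / 2))
           - ((1 - Δ) / 2) * Real.logb 2 ((1 - Δ) / 2)
  let F := ρ00 + η * ρ11
  let Δ' := Real.sqrt ((ρ00 - η * ρ11) ^ 2 + 4 * η * c ^ 2)
  let μ1 := (F + Δ') / 2
  let μ2 := (F - Δ') / 2;
  -S - (∑ k ∈ Finset.Icc 1 n,
          (1 - p) ^ (k - 1) * p * ρ11 * Real.logb 2 ((1 - p) ^ (k - 1) * p * ρ11))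
    - μ1 * Real.logb 2 μ1 - μ2 * Real.logb 2 μ2


open Real


/-- antiderivative of 2/(1-t^2) -/
lemma log_ratio_integral {x : ℝ} (hx0 : 0 ≤ x) (hx1 : x < 1) :
    ∫ t in (0:ℝ)..x, 2 / (1 - t^2) = Real.log (1+x) - Real.log (1-x) := by
  have hne : ∀ t ∈ Set.uIcc (0:ℝ) x, 1 - t^2 ≠ 0 := by
    intro t ht
    rw [Set.uIcc_of_le hx0] at ht
    nlinarith [ht.1, ht.2]
  have hder : ∀ t ∈ Set.uIcc (0:ℝ) x,
      HasDerivAt (fun s => Real.log (1+s) - Real.log (1-s)) (2/(1-t^2)) t := by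
    intro t ht
    rw [Set.uIcc_of_le hx0] at ht
    have h1 : (0:ℝ) < 1 + t := by nlinarith [ht.1]
    have h2 : (0:ℝ) < 1 - t := by nlinarith [ht.2]
    have d1 : HasDerivAt (fun s : ℝ => Real.log (1+s)) (1/(1+t)) t := by
      have := (((hasDerivAt_id t).const_add 1).log h1.ne')
      simpa using this
    have d2 : HasDerivAt (fun s : ℝ => Real.log (1-s)) (-(1/(1-t))) t := by
      have := (((hasDerivAt_id t).const_sub 1).log h2.ne')
      simpa [neg_div] using this
    have := d1.sub d2
    refine this.congr_deriv ?_
    have h3 : 1 - t^2 ≠ 0 := by nlinarith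
    field_simp
    ring
  have hint : IntervalIntegrable (fun t => 2/(1-t^2)) MeasureTheory.volume 0 x := by
    apply ContinuousOn.intervalIntegrable
    exact ContinuousOn.div continuousOn_const (by fun_prop) hne
  rw [intervalIntegral.integral_eq_sub_of_hasDerivAt hder hint]
  simp

lemma integral_scaled {u : ℝ} (hu0 : 0 < u) (hu1 : u < 1) :
    ∫ t in (0:ℝ)..1, 2 / (1 - u^2 * t^2)
      = (1/u) * (Real.log (1+u) - Real.log (1-u)) := by
  have h := intervalIntegral.integral_comp_mul_left (a := (0:ℝ)) (b := 1)
      (fun s => 2/(1-s^2)) hu0.ne'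
  simp only [mul_zero, mul_one, smul_eq_mul] at h
  have e : (fun t : ℝ => 2 / (1 - u^2 * t^2)) = fun t : ℝ => 2 / (1 - (u*t)^2) := by
    funext t; ring_nf
  rw [e, h, log_ratio_integral hu0.le hu1]
  rw [one_div]


/-- entropy-type building block -/
noncomputable def entb (x : ℝ) : ℝ := x * Real.logb 2 x

lemma entb_eq : entb = fun x : ℝ => x * Real.log x / Real.log 2 := by
  funext x; simp [entb, Real.logb, mul_div_assoc]

lemma continuous_entb : Continuous entb := by
  rw [entb_eq]
  exact Real.continuous_mul_log.div_const _

lemma hasDerivAt_sqrt_aux (q k c : ℝ) (h : 0 < q + k*c^2) :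
    HasDerivAt (fun x => Real.sqrt (q + k*x^2)) (k*c / Real.sqrt (q + k*c^2)) c := by
  have hinner : HasDerivAt (fun x : ℝ => q + k*x^2) (k*(2*c)) c := by
    have := ((hasDerivAt_pow 2 c).const_mul k).const_add q
    simpa [mul_comm] using this
  have hs := (Real.hasDerivAt_sqrt h.ne').comp c hinner
  refine hs.congr_deriv ?_
  have hsq : Real.sqrt (q + k*c^2) ≠ 0 := (Real.sqrt_pos.2 h).ne'
  field_simp

lemma hasDerivAt_entb_comp {g : ℝ → ℝ} {g' c : ℝ} (hg : HasDerivAt g g' c)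
    (h0 : 0 < g c) :
    HasDerivAt (fun x => entb (g x)) (((Real.log (g c) + 1)/Real.log 2) * g') c := by
  have h1 : HasDerivAt (fun x : ℝ => x * Real.log x) (Real.log (g c) + 1) (g c) :=
    Real.hasDerivAt_mul_log h0.ne'
  have h2 := (h1.comp c hg).div_const (Real.log 2)
  have he : (fun x => entb (g x)) = fun x => (g x * Real.log (g x))/Real.log 2 := by
    funext x; simp [entb, Real.logb, mul_div_assoc]
  rw [he]
  refine h2.congr_deriv ?_
  ring

lemma key_ineq {u v η F : ℝ} (hu0 : 0 < u) (hu1 : u < 1) (hv0 : 0 < v) (hv1 : v < 1)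
    (hη : 0 < η) (hηF : η < F) (hrel : F * v^2 - η * u^2 ≤ F - η) :
    (η/F) * ((1/v) * (Real.log (1+v) - Real.log (1-v)))
      < (1/u) * (Real.log (1+u) - Real.log (1-u)) := by
  have hF : 0 < F := hη.trans hηF
  rw [← integral_scaled hu0 hu1, ← integral_scaled hv0 hv1,
    ← intervalIntegral.integral_const_mul]
  have hcu : ContinuousOn (fun t : ℝ => 2 / (1 - u^2 * t^2)) (Set.Icc 0 1) := by
    apply ContinuousOn.div continuousOn_const (by fun_prop)
    intro t ht
    have ht2 : t^2 ≤ 1 := by nlinarith [ht.1, ht.2]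
    have h2 : u^2*t^2 ≤ u^2 := by nlinarith [sq_nonneg u]
    have h3 : u^2 < 1 := by nlinarith
    have : 0 < 1 - u^2*t^2 := by nlinarith
    exact this.ne'
  have hcv : ContinuousOn (fun t : ℝ => η/F * (2 / (1 - v^2 * t^2))) (Set.Icc 0 1) := by
    apply ContinuousOn.mul continuousOn_const
    apply ContinuousOn.div continuousOn_const (by fun_prop)
    intro t ht
    have ht2 : t^2 ≤ 1 := by nlinarith [ht.1, ht.2]
    have h2 : v^2*t^2 ≤ v^2 := by nlinarith [sq_nonneg v]
    have h3 : v^2 < 1 := by nlinarith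
    have : 0 < 1 - v^2*t^2 := by nlinarith
    exact this.ne'
  apply intervalIntegral.integral_lt_integral_of_continuousOn_of_le_of_exists_lt
    zero_lt_one hcv hcu
  · intro t ht
    have ht0 : 0 < t := ht.1
    have ht1 : t ≤ 1 := ht.2
    have ht2 : t^2 ≤ 1 := by nlinarith
    have hvd : 0 < 1 - v^2 * t^2 := by nlinarith [sq_nonneg v, sq_nonneg t]
    have hud : 0 < 1 - u^2 * t^2 := by nlinarith [sq_nonneg u, sq_nonneg t]
    rw [div_mul_div_comm, div_le_div_iff₀ (by positivity) hud]
    -- η * 2 * (1 - u^2 t^2) ≤ 2 * (F * (1 - v^2 t^2))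
    nlinarith [mul_le_mul_of_nonneg_left hrel (sq_nonneg t),
      mul_nonneg (sub_nonneg.2 ht2) (sub_nonneg.2 hηF.le)]
  · refine ⟨0, Set.left_mem_Icc.2 zero_le_one, ?_⟩
    norm_num
    exact (div_lt_one hF).2 hηF


lemma main_aux (a b η : ℝ) (ha : 0 < a) (hb : 0 < b) (hab : a + b = 1)
    (hη0 : 0 < η) (hη1 : η < 1) :
    StrictMonoOn (fun c =>
      entb ((1 + Real.sqrt ((b-a)^2 + 4*c^2))/2)
      + entb ((1 - Real.sqrt ((b-a)^2 + 4*c^2))/2)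
      - entb ((a + η*b + Real.sqrt ((a - η*b)^2 + 4*η*c^2))/2)
      - entb ((a + η*b - Real.sqrt ((a - η*b)^2 + 4*η*c^2))/2))
      (Set.Icc 0 (Real.sqrt (a*b))) := by
  have hF0 : 0 < a + η*b := by positivity
  apply strictMonoOn_of_deriv_pos (convex_Icc _ _)
  · apply Continuous.continuousOn
    have h1 : Continuous fun c : ℝ => (1 + Real.sqrt ((b-a)^2 + 4*c^2))/2 := by fun_prop
    have h2 : Continuous fun c : ℝ => (1 - Real.sqrt ((b-a)^2 + 4*c^2))/2 := by fun_prop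
    have h3 : Continuous fun c : ℝ => (a + η*b + Real.sqrt ((a - η*b)^2 + 4*η*c^2))/2 := by
      fun_prop
    have h4 : Continuous fun c : ℝ => (a + η*b - Real.sqrt ((a - η*b)^2 + 4*η*c^2))/2 := by
      fun_prop
    exact (((continuous_entb.comp h1).add (continuous_entb.comp h2)).sub
      (continuous_entb.comp h3)).sub (continuous_entb.comp h4)
  · rw [interior_Icc]
    intro c hc
    obtain ⟨hc0, hcs⟩ := hc
    have hc2 : c^2 < a*b := by
      have := (Real.lt_sqrt hc0.le).1 hcs
      linarith
    set Δ := Real.sqrt ((b-a)^2 + 4*c^2) with hΔdef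
    set Δ' := Real.sqrt ((a - η*b)^2 + 4*η*c^2) with hΔ'def
    have hΔsq : Δ^2 = (b-a)^2 + 4*c^2 := Real.sq_sqrt (by positivity)
    have hΔ'sq : Δ'^2 = (a - η*b)^2 + 4*η*c^2 := Real.sq_sqrt (by positivity)
    have hΔ0 : 0 < Δ := Real.sqrt_pos.2 (by positivity)
    have hΔ'0 : 0 < Δ' := Real.sqrt_pos.2 (by positivity)
    have hΔ1 : Δ < 1 := by
      rw [hΔdef, show (1:ℝ) = Real.sqrt 1 from (Real.sqrt_one).symm]
      apply Real.sqrt_lt_sqrt (by positivity)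
      nlinarith
    have hΔ'F : Δ' < a + η*b := by
      rw [hΔ'def]
      rw [show a + η*b = Real.sqrt ((a+η*b)^2) from
        (Real.sqrt_sq hF0.le).symm]
      apply Real.sqrt_lt_sqrt (by positivity)
      nlinarith
    have hηF : η < a + η*b := by nlinarith
    -- derivatives
    have hsd : HasDerivAt (fun x => Real.sqrt ((b-a)^2 + 4*x^2)) (4*c/Δ) c :=
      hasDerivAt_sqrt_aux _ 4 c (by positivity)
    have hsd' : HasDerivAt (fun x => Real.sqrt ((a - η*b)^2 + 4*η*x^2)) (4*η*c/Δ') c :=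
      hasDerivAt_sqrt_aux _ (4*η) c (by positivity)
    have hg1 : HasDerivAt (fun x => (1 + Real.sqrt ((b-a)^2 + 4*x^2))/2) ((4*c/Δ)/2) c :=
      (hsd.const_add 1).div_const 2
    have hg2 : HasDerivAt (fun x => (1 - Real.sqrt ((b-a)^2 + 4*x^2))/2) (-(4*c/Δ)/2) c :=
      (hsd.const_sub 1).div_const 2
    have hg3 : HasDerivAt (fun x => (a + η*b + Real.sqrt ((a - η*b)^2 + 4*η*x^2))/2)
        ((4*η*c/Δ')/2) c := (hsd'.const_add _).div_const 2
    have hg4 : HasDerivAt (fun x => (a + η*b - Real.sqrt ((a - η*b)^2 + 4*η*x^2))/2)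
        (-(4*η*c/Δ')/2) c := (hsd'.const_sub _).div_const 2
    have hd1 := hasDerivAt_entb_comp hg1
      (by show (0:ℝ) < (1 + Δ)/2; linarith)
    have hd2 := hasDerivAt_entb_comp hg2
      (by show (0:ℝ) < (1 - Δ)/2; linarith)
    have hd3 := hasDerivAt_entb_comp hg3
      (by show (0:ℝ) < (a + η*b + Δ')/2; linarith)
    have hd4 := hasDerivAt_entb_comp hg4
      (by show (0:ℝ) < (a + η*b - Δ')/2; linarith)
    have hD : HasDerivAt (fun c =>
        entb ((1 + Real.sqrt ((b-a)^2 + 4*c^2))/2)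
        + entb ((1 - Real.sqrt ((b-a)^2 + 4*c^2))/2)
        - entb ((a + η*b + Real.sqrt ((a - η*b)^2 + 4*η*c^2))/2)
        - entb ((a + η*b - Real.sqrt ((a - η*b)^2 + 4*η*c^2))/2))
        ((((Real.log ((1 + Δ)/2) + 1)/Real.log 2) * ((4*c/Δ)/2)
          + ((Real.log ((1 - Δ)/2) + 1)/Real.log 2) * (-(4*c/Δ)/2))
          - ((Real.log ((a + η*b + Δ')/2) + 1)/Real.log 2) * ((4*η*c/Δ')/2)
          - ((Real.log ((a + η*b - Δ')/2) + 1)/Real.log 2) * (-(4*η*c/Δ')/2)) c := by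
      exact ((hd1.add hd2).sub hd3).sub hd4
    rw [hD.deriv]
    set v := Δ'/(a + η*b) with hvdef
    have hv0 : 0 < v := div_pos hΔ'0 hF0
    have hv1 : v < 1 := (div_lt_one hF0).2 hΔ'F
    have hrel : (a + η*b) * v^2 - η * Δ^2 ≤ (a + η*b) - η := by
      have hFv : (a + η*b) * v^2 = Δ'^2/(a+η*b) := by
        rw [hvdef]; field_simp
      rw [hFv, sub_le_iff_le_add, div_le_iff₀ hF0]
      rw [hΔ'sq, hΔsq]
      have hsub : a = 1 - b := by linarith
      have hid : ((a+η*b) - η + η*((b-a)^2+4*c^2)) * (a+η*b) - ((a-η*b)^2+4*η*c^2)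
          = 4*η*(1-η)*b*(a*b - c^2) := by rw [hsub]; ring
      have h4 : 0 ≤ 4*η*(1-η)*b*(a*b - c^2) := by
        have : (0:ℝ) ≤ a*b - c^2 := by linarith
        have h5 : (0:ℝ) ≤ 1 - η := by linarith
        positivity
      nlinarith [hid, h4]
    have hkey := key_ineq hΔ0 hΔ1 hv0 hv1 hη0 hηF hrel
    have hlog2 : 0 < Real.log 2 := Real.log_pos one_lt_two
    have hL1 : Real.log ((1+Δ)/2) = Real.log (1+Δ) - Real.log 2 :=
      Real.log_div (by linarith) two_ne_zero
    have hL2 : Real.log ((1-Δ)/2) = Real.log (1-Δ) - Real.log 2 :=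
      Real.log_div (by linarith) two_ne_zero
    have hL3 : Real.log ((a+η*b+Δ')/2) = Real.log (a+η*b+Δ') - Real.log 2 :=
      Real.log_div (by linarith) two_ne_zero
    have hL4 : Real.log ((a+η*b-Δ')/2) = Real.log (a+η*b-Δ') - Real.log 2 :=
      Real.log_div (by linarith) two_ne_zero
    have hlogv : Real.log (a+η*b+Δ') - Real.log (a+η*b-Δ')
        = Real.log (1+v) - Real.log (1-v) := by
      have e1 : a+η*b+Δ' = (a+η*b)*(1+v) := by rw [hvdef]; field_simp
      have e2 : a+η*b-Δ' = (a+η*b)*(1-v) := by rw [hvdef]; field_simp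
      rw [e1, e2, Real.log_mul hF0.ne' (by linarith : (0:ℝ) < 1+v).ne',
        Real.log_mul hF0.ne' (by linarith : (0:ℝ) < 1-v).ne']
      ring
    have hN : 0 < (2*c/Δ) * (Real.log (1+Δ) - Real.log (1-Δ))
        - (2*η*c/Δ') * (Real.log (1+v) - Real.log (1-v)) := by
      have e3 : (2*η*c/Δ') * (Real.log (1+v) - Real.log (1-v))
          = (2*c) * ((η/(a+η*b)) * ((1/v)*(Real.log (1+v) - Real.log (1-v)))) := by
        rw [hvdef]; field_simp
      have e4 : (2*c/Δ) * (Real.log (1+Δ) - Real.log (1-Δ))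
          = (2*c) * ((1/Δ)*(Real.log (1+Δ) - Real.log (1-Δ))) := by ring
      rw [e3, e4]
      have := mul_lt_mul_of_pos_left hkey (by linarith : (0:ℝ) < 2*c)
      linarith
    have efin : (((Real.log ((1 + Δ)/2) + 1)/Real.log 2) * ((4*c/Δ)/2)
          + ((Real.log ((1 - Δ)/2) + 1)/Real.log 2) * (-(4*c/Δ)/2))
          - ((Real.log ((a + η*b + Δ')/2) + 1)/Real.log 2) * ((4*η*c/Δ')/2)
          - ((Real.log ((a + η*b - Δ')/2) + 1)/Real.log 2) * (-(4*η*c/Δ')/2)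
        = ((2*c/Δ) * (Real.log (1+Δ) - Real.log (1-Δ))
          - (2*η*c/Δ') * (Real.log (a+η*b+Δ') - Real.log (a+η*b-Δ'))) / Real.log 2 := by
      rw [hL1, hL2, hL3, hL4]; ring
    rw [efin, hlogv]
    exact div_pos hN hlog2




lemma randTemp_eq (ρ00 ρ11 p : ℝ) (n : ℕ) (c : ℝ) :
    RandTemp ρ00 ρ11 p n c =
      entb ((1 + Real.sqrt ((ρ11-ρ00)^2 + 4*c^2))/2)
      + entb ((1 - Real.sqrt ((ρ11-ρ00)^2 + 4*c^2))/2)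
      - entb ((ρ00 + (1-p)^n*ρ11 + Real.sqrt ((ρ00 - (1-p)^n*ρ11)^2 + 4*(1-p)^n*c^2))/2)
      - entb ((ρ00 + (1-p)^n*ρ11 - Real.sqrt ((ρ00 - (1-p)^n*ρ11)^2 + 4*(1-p)^n*c^2))/2)
      - (∑ k ∈ Finset.Icc 1 n,
          (1 - p) ^ (k - 1) * p * ρ11 * Real.logb 2 ((1 - p) ^ (k - 1) * p * ρ11)) := by
  simp only [RandTemp, entb]
  ring

/-- for fixed diagonal entries `ρ00, ρ11 ≥ 0` with `ρ00 + ρ11 = 1`,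
`0 < ρ11 < 1`, fixed `p ∈ (0,1)` and fixed integer `n ≥ 1`, the map
`c ↦ R_temp(c)` is strictly increasing on `[0, √(ρ00 ρ11)]`. -/
theorem randTemp_strictMonoOn (ρ00 ρ11 p : ℝ) (n : ℕ)
    (h00 : 0 ≤ ρ00) (h11 : 0 ≤ ρ11) (hsum : ρ00 + ρ11 = 1)
    (h11pos : 0 < ρ11) (h11lt : ρ11 < 1)
    (hp0 : 0 < p) (hp1 : p < 1) (hn : 1 ≤ n) :
    StrictMonoOn (fun c => RandTemp ρ00 ρ11 p n c)
      (Set.Icc 0 (Real.sqrt (ρ00 * ρ11))) := by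
  intro x hx y hy hxy
  have h00' : 0 < ρ00 := by linarith
  have h := main_aux ρ00 ρ11 ((1-p)^n) h00' h11pos hsum
    (pow_pos (by linarith) n) (pow_lt_one₀ (by linarith) (by linarith) (by omega))
    hx hy hxy
  show RandTemp ρ00 ρ11 p n x < RandTemp ρ00 ρ11 p n y
  rw [randTemp_eq, randTemp_eq]
  simp only [] at h
  linarith
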